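/- In the smoothness-based PoA bound, for the specific choice ε → 0⁺ and f(w) = exp(−1/(w+a)), one can choose a sufficiently large so that λ = 1 + ε', giving price of anarchy at most (1+ε')/(1−ε); formally: for any ε' > 0 and bounds 0 < w_min ≤ w_max, there exist a > 0 and ε ∈ (0,1) such that for all w ∈ [0, w_max], w* ∈ [w_min, w_max]: w*·exp(−1/(w+w*+a)) ≤ (1+ε')·w*·exp(−1/(w*+a)) + ε·w·exp(−1/(w+a)). -/
import Mathlib


theorem flock_poa_one_plus_eps
    (ε' wmin wmax : ℝ) (hε' : 0 < ε') (hwmin : 0 < wmin) (hminmax : wmin ≤ wmax) :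
    ∃ a ε : ℝ, 0 < a ∧ 0 < ε ∧ ε < 1 ∧
      ∀ w wstar : ℝ, 0 ≤ w → w ≤ wmax → wmin ≤ wstar → wstar ≤ wmax →
        wstar * Real.exp (-1 / (w + wstar + a)) ≤
          (1 + ε') * (wstar * Real.exp (-1 / (wstar + a))) +
            ε * (w * Real.exp (-1 / (w + a))) := by
  have hwmax : 0 < wmax := lt_of_lt_of_le hwmin hminmax
  set L := Real.log (1 + ε') with hL
  have hLpos : 0 < L := Real.log_pos (by linarith)
  refine ⟨1 + wmax / L, 1/2, by positivity, by norm_num, by norm_num, ?_⟩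
  set a := 1 + wmax / L with ha
  have ha1 : 1 ≤ a := by
    rw [ha]
    have : 0 ≤ wmax / L := by positivity
    linarith
  have haL : L * a ≥ wmax := by
    rw [ha]
    have h : L * (1 + wmax / L) = L + wmax := by field_simp
    linarith
  intro w wstar hw hwle hws hwsle
  have hp : (0:ℝ) < wstar + a := by linarith
  have hq : (0:ℝ) < w + wstar + a := by linarith
  -- key: 1/(wstar+a) - 1/(w+wstar+a) ≤ L
  have hkey : -1 / (w + wstar + a) ≤ -1 / (wstar + a) + L := by
    rw [div_add' _ _ _ hp.ne', div_le_div_iff₀ hq hp]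
    have hpa : a ≤ wstar + a := by linarith
    have hqa : a ≤ w + wstar + a := by linarith
    have h1 : L * a * a ≥ wmax := by nlinarith
    nlinarith [mul_le_mul hpa hqa (le_of_lt (by linarith : (0:ℝ) < a)) (le_of_lt hp),
      mul_pos hp hq]
  have hexp : Real.exp (-1 / (w + wstar + a)) ≤
      (1 + ε') * Real.exp (-1 / (wstar + a)) := by
    calc Real.exp (-1 / (w + wstar + a)) ≤ Real.exp (-1 / (wstar + a) + L) :=
          Real.exp_le_exp.mpr hkey
      _ = (1 + ε') * Real.exp (-1 / (wstar + a)) := by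
          rw [Real.exp_add, hL, Real.exp_log (by linarith)]; ring
  have hws0 : 0 ≤ wstar := le_of_lt (lt_of_lt_of_le hwmin hws)
  have h1 : wstar * Real.exp (-1 / (w + wstar + a)) ≤
      (1 + ε') * (wstar * Real.exp (-1 / (wstar + a))) := by
    have := mul_le_mul_of_nonneg_left hexp hws0
    linarith [this]
  have h2 : 0 ≤ (1/2 : ℝ) * (w * Real.exp (-1 / (w + a))) := by positivity
  linarith
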